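/- Let ρ = Σ_{j=1}^{n} (n−j+1/2)ε_j be the half-sum of positive roots of B_n (n ≥ 3) and λ = ε_1 + ⋯ + ε_{n−1}. Then the sequence (ε_{n−2}−ε_{n−1}, ε_{n−1}−ε_n) links −ε_n − λ + ρ to (−ε_{n−2} − ε_{n−1} + ε_n) − λ + ρ: setting δ = −ε_n − λ + ρ, one has ⟨δ, (ε_{n−2}−ε_{n−1})^∨⟩ ∈ ℤ_{≥0}; with δ₁ = s_{ε_{n−2}−ε_{n−1}}(δ), one has ⟨δ₁, (ε_{n−1}−ε_n)^∨⟩ ∈ ℤ_{≥0}; and s_{ε_{n−1}−ε_n}(δ₁) = (−ε_{n−2} − ε_{n−1} + ε_n) − λ + ρ. -/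

import Mathlib

/-!
Since `-ε_n - λ = -(ε_1 + ⋯ + ε_n)`, the starting weight is `δ = ρ - 𝟙`, so its pairing with a
simple root `ε_a - ε_{a+1}` is that of `ρ`, namely `ρ_a - ρ_{a+1} = 1`. Hence
`δ₁ = δ - (ε_{n-2} - ε_{n-1})`, whose pairing with `ε_{n-1} - ε_n` is `1 + 1 = 2`, and the second
reflection gives `δ - (ε_{n-2} - ε_{n-1}) - 2(ε_{n-1} - ε_n)`, which is the target weight.
-/

noncomputable section

/-- The standard basis vector `ε_j` of `ℝ^n`. -/
def eps (n : ℕ) (j : Fin n) : Fin n → ℝ := Pi.single j 1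

/-- The standard inner product on `ℝ^n`. -/
def ip {n : ℕ} (v w : Fin n → ℝ) : ℝ := ∑ t, v t * w t

/-- The pairing `⟨v, β^∨⟩ = 2⟨v, β⟩/⟨β, β⟩`. -/
def pairing {n : ℕ} (v β : Fin n → ℝ) : ℝ := 2 * ip v β / ip β β

/-- The reflection `s_β(v) = v - ⟨v, β^∨⟩ β`. -/
def wrefl {n : ℕ} (β v : Fin n → ℝ) : Fin n → ℝ := v - pairing v β • β

/-- `ρ = Σ_{j=1}^{n} (n-j+1/2) ε_j`, the half sum of positive roots of `B_n` (0-based indices). -/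
def rhoB (n : ℕ) : Fin n → ℝ := fun t => (n : ℝ) - (t : ℕ) - 1 / 2

/-- `λ = ε_1 + ⋯ + ε_{n-1}`. -/
def lamB (n : ℕ) : Fin n → ℝ :=
  ∑ j ∈ Finset.univ.filter (fun j : Fin n => (j : ℕ) < n - 1), eps n j

lemma eps_apply {n : ℕ} (i t : Fin n) : eps n i t = if t = i then 1 else 0 := by
  simp [eps, Pi.single_apply]

lemma ip_eps_right {n : ℕ} (v : Fin n → ℝ) (j : Fin n) : ip v (eps n j) = v j := by
  simp [ip, eps, Pi.single_apply, mul_ite]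

lemma ip_sub_right {n : ℕ} (v w w' : Fin n → ℝ) : ip v (w - w') = ip v w - ip v w' := by
  simp [ip, mul_sub, Finset.sum_sub_distrib]

lemma ip_eps_sub_eps_self {n : ℕ} {i j : Fin n} (h : i ≠ j) :
    ip (eps n i - eps n j) (eps n i - eps n j) = 2 := by
  rw [ip_sub_right, ip_eps_right, ip_eps_right]
  simp [eps_apply, h, h.symm]
  norm_num

lemma pairing_eps_sub_eps {n : ℕ} (v : Fin n → ℝ) {i j : Fin n} (h : i ≠ j) :
    pairing v (eps n i - eps n j) = v i - v j := by
  rw [pairing, ip_eps_sub_eps_self h, ip_sub_right, ip_eps_right, ip_eps_right]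
  ring

lemma lamB_apply {n : ℕ} (t : Fin n) : lamB n t = if (t : ℕ) < n - 1 then 1 else 0 := by
  simp [lamB, eps, Finset.sum_apply, Finset.sum_pi_single]

lemma eps_add_lamB {n : ℕ} {k : Fin n} (hk : (k : ℕ) = n - 1) : eps n k + lamB n = 1 := by
  funext t
  rcases eq_or_ne t k with rfl | htk
  · simp [eps_apply, lamB_apply, hk]
  · have ht : (t : ℕ) < n - 1 := by
      have := Fin.val_ne_of_ne htk
      omega
    simp [eps_apply, lamB_apply, htk, ht]

lemma rhoB_sub_rhoB_of_val_eq_succ {n : ℕ} {s t : Fin n} (h : (t : ℕ) = s + 1) :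
    rhoB n s - rhoB n t = 1 := by
  simp only [rhoB, h]
  push_cast
  ring

/-- In type `B_n` (`n ≥ 3`), the sequence `(ε_{n-2}-ε_{n-1}, ε_{n-1}-ε_n)` links
`-ε_n - λ + ρ` to `(-ε_{n-2}-ε_{n-1}+ε_n) - λ + ρ`. -/
theorem stmt11 (n : ℕ) (hn : 3 ≤ n) :
    (∃ m : ℕ, pairing (-eps n ⟨n - 1, by omega⟩ - lamB n + rhoB n)
        (eps n ⟨n - 3, by omega⟩ - eps n ⟨n - 2, by omega⟩) = (m : ℝ)) ∧
    (∃ m : ℕ, pairing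
        (wrefl (eps n ⟨n - 3, by omega⟩ - eps n ⟨n - 2, by omega⟩)
          (-eps n ⟨n - 1, by omega⟩ - lamB n + rhoB n))
        (eps n ⟨n - 2, by omega⟩ - eps n ⟨n - 1, by omega⟩) = (m : ℝ)) ∧
    wrefl (eps n ⟨n - 2, by omega⟩ - eps n ⟨n - 1, by omega⟩)
        (wrefl (eps n ⟨n - 3, by omega⟩ - eps n ⟨n - 2, by omega⟩)
          (-eps n ⟨n - 1, by omega⟩ - lamB n + rhoB n)) =
      (-eps n ⟨n - 3, by omega⟩ - eps n ⟨n - 2, by omega⟩ + eps n ⟨n - 1, by omega⟩)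
        - lamB n + rhoB n := by
  set i : Fin n := ⟨n - 3, by omega⟩
  set j : Fin n := ⟨n - 2, by omega⟩
  set k : Fin n := ⟨n - 1, by omega⟩
  have hij : i ≠ j := Fin.ne_of_val_ne (by simp [i, j]; omega)
  have hjk : j ≠ k := Fin.ne_of_val_ne (by simp [j, k]; omega)
  have hik : i ≠ k := Fin.ne_of_val_ne (by simp [i, k]; omega)
  have hlam : lamB n = 1 - eps n k := eq_sub_of_add_eq' (eps_add_lamB rfl)
  have h₁ : pairing (rhoB n - 1) (eps n i - eps n j) = 1 := by
    rw [pairing_eps_sub_eps _ hij, Pi.sub_apply, Pi.sub_apply, Pi.one_apply,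
      Pi.one_apply, sub_sub_sub_cancel_right]
    exact rhoB_sub_rhoB_of_val_eq_succ (by simp [i, j]; omega)
  have hrefl₁ : wrefl (eps n i - eps n j) (rhoB n - 1) = rhoB n - 1 - (eps n i - eps n j) := by
    rw [wrefl, h₁, one_smul]
  have h₂ : pairing (rhoB n - 1 - (eps n i - eps n j)) (eps n j - eps n k) = 2 := by
    rw [pairing_eps_sub_eps _ hjk]
    have hρjk := rhoB_sub_rhoB_of_val_eq_succ (s := j) (t := k) (by simp [j, k]; omega)
    simp only [Pi.sub_apply, Pi.one_apply, eps_apply, if_true, if_neg hij.symm,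
      if_neg hik.symm, if_neg hjk.symm]
    linarith
  rw [hlam, show -eps n k - (1 - eps n k) + rhoB n = rhoB n - 1 by abel]
  refine ⟨⟨1, by rw [h₁]; norm_num⟩, ⟨2, by rw [hrefl₁, h₂]; norm_num⟩, ?_⟩
  rw [hrefl₁, wrefl, h₂]
  module
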